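/- There is a closed λ-term pred_λ of Λ_det and a constant c such that for every value k and every natural number n ≥ 1, pred_λ k ⟨n̂⟩ →det^m k ⟨pred(n̂)⟩ where m ≤ c·(log₂(n+1)+1), i.e. the predecessor of a nonzero binary counter is computed in O(log n) →det-steps. -/

import Mathlib

namespace LogTM

/-- Untyped λ-terms with de Bruijn indices. -/
inductive Lam : Type
  | var : ℕ → Lam
  | lam : Lam → Lam
  | app : Lam → Lam → Lam

namespace Lam

/-- Values: variables and abstractions. -/
def IsValue : Lam → Prop
  | var _ => True
  | lam _ => True
  | app _ _ => False

/-- Terms of the deterministic λ-calculus `Λ_det`: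
    the argument of every application is a value. -/
def InDet : Lam → Prop
  | var _ => True
  | lam t => InDet t
  | app t u => InDet t ∧ InDet u ∧ IsValue u

/-- Shift the free variables `≥ d` by one. -/
def lift : ℕ → Lam → Lam
  | d, var n => if n < d then var n else var (n + 1)
  | d, lam t => lam (lift (d + 1) t)
  | d, app t u => app (lift d t) (lift d u)

/-- Capture-avoiding substitution `t[k := u]`. -/
def subst : Lam → ℕ → Lam → Lam
  | var n, k, u => if n < k then var n else if n = k then u else var (n - 1)
  | lam t, k, u => lam (subst t (k + 1) (lift 0 u))
  | app t s, k, u => app (subst t k u) (subst s k u)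

/-- Weak evaluation `→det` of the deterministic λ-calculus: β at the root,
    closed under evaluation contexts `E ::= ⟨·⟩ | E v`. -/
inductive Step : Lam → Lam → Prop
  | beta {t v : Lam} : IsValue v → Step (app (lam t) v) (subst t 0 v)
  | appL {t t' v : Lam} : IsValue v → Step t t' → Step (app t v) (app t' v)

/-- `n`-fold iteration of `→det`. -/
inductive StepN : ℕ → Lam → Lam → Prop
  | refl (t : Lam) : StepN 0 t t
  | head {n : ℕ} {t u r : Lam} : Step t u → StepN n u r → StepN (n + 1) t r

/-- All free variables are `< d`. -/
def ClosedUnder : ℕ → Lam → Prop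
  | d, var n => n < d
  | d, lam t => ClosedUnder (d + 1) t
  | d, app t u => ClosedUnder d t ∧ ClosedUnder d u

/-- Closed terms. -/
def Closed (t : Lam) : Prop := ClosedUnder 0 t

end Lam

/-- `n` nested abstractions. -/
def iterLam : ℕ → Lam → Lam
  | 0, t => t
  | n + 1, t => .lam (iterLam n t)

/-- Left-nested applications. -/
def mkApps : Lam → List Lam → Lam
  | t, [] => t
  | t, u :: us => mkApps (.app t u) us

/-- Scott encoding of the character `a` of a `k`-letter (ordered) alphabet:
    `⟨a_i⟩ = λx_1…λx_k.x_i`. -/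
def encChar (k : ℕ) (a : Fin k) : Lam := iterLam k (.var (k - 1 - (a : ℕ)))

/-- Scott encoding of strings over a `k`-letter (ordered) alphabet:
    `⟨ε⟩ = λx_1…λx_k.λx_ε.x_ε` and `⟨a_i·r⟩ = λx_1…λx_k.λx_ε.x_i ⟨r⟩`. -/
def encStr (k : ℕ) : List (Fin k) → Lam
  | [] => iterLam (k + 1) (.var 0)
  | a :: r => iterLam (k + 1) (.app (.var (k - (a : ℕ))) (encStr k r))

/-- Scott encoding of binary strings (alphabet `{0,1}`, `false = 0 < 1 = true`). -/
def encBits : List Bool → Lam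
  | [] => .lam (.lam (.lam (.var 0)))
  | false :: s => .lam (.lam (.lam (.app (.var 2) (encBits s))))
  | true :: s => .lam (.lam (.lam (.app (.var 1) (encBits s))))

/-- Successor on reversed binary strings. -/
def rsucc : List Bool → List Bool
  | [] => [true]
  | false :: s => true :: s
  | true :: s => false :: rsucc s

/-- Predecessor on (nonempty) reversed binary strings. -/
def rpred : List Bool → List Bool
  | [] => []
  | false :: s => true :: rpred s
  | [true] => []
  | true :: b :: s => false :: b :: s

/-- Lookup of the `(n+1)`-th character of a string using a reversed-binary counter. -/
def rlookup {α : Type*} : List Bool → List α → Option α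
  | _, [] => none
  | [], c :: _ => some c
  | b :: nb, _ :: s => rlookup (rpred (b :: nb)) s

/-- Input alphabet `B_I = {0, 1, L, R}`. -/
inductive BI : Type
  | b0 | b1 | bL | bR

/-- Work alphabet `B_W = {0, 1, □}`. -/
inductive BW : Type
  | w0 | w1 | wB

/-- Input head moves `{-1, +1, 0}`. -/
inductive IDir : Type
  | minus | plus | zero

/-- Work head moves `{←, →, ↓}`. -/
inductive WDir : Type
  | left | right | stay

/-- A deterministic binary Turing machine with input: states `Fin Q`, initial state
    `qin`, final states `qT` and `qF`, and a partial transition function `δ` that is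
    undefined on the final states. -/
structure TM where
  Q : ℕ
  qin : Fin Q
  qT : Fin Q
  qF : Fin Q
  δ : BI → BW → Fin Q → Option (IDir × BW × WDir × Fin Q)
  δ_final : ∀ b a s, (s = qT ∨ s = qF) → δ b a s = none

/-- A configuration `(i, n | w_l, a, w_r | s)`: read-only input `i`, input-head
    position `n`, work tape `w_l, a, w_r` (head on `a`), current state `s`. -/
structure Config (M : TM) where
  input : List BI
  pos : ℕ
  left : List BW
  head : BW
  right : List BW
  state : Fin M.Q

/-- Final configurations: the state is `qT` or `qF`. -/
def Config.Final {M : TM} (C : Config M) : Prop := C.state = M.qT ∨ C.state = M.qF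

/-- One machine transition, as a partial function (the relation `C →M D` is
    `M.step C = some D`). -/
def TM.step (M : TM) (C : Config M) : Option (Config M) :=
  match C.input[C.pos]? with
  | none => none
  | some b =>
    match M.δ b C.head C.state with
    | none => none
    | some (d, a', mv, s') =>
      let pos' : ℕ :=
        match d with
        | .minus => C.pos - 1
        | .plus => C.pos + 1
        | .zero => C.pos
      let w : List BW × BW × List BW :=
        match mv with
        | .stay => (C.left, a', C.right)
        | .left =>
          match C.left.getLast? with
          | none => ([], BW.wB, a' :: C.right)
          | some a'' => (C.left.dropLast, a'', a' :: C.right)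
        | .right =>
          match C.right with
          | [] => (C.left ++ [a'], BW.wB, [])
          | a'' :: r => (C.left ++ [a'], a'', r)
      some ⟨C.input, pos', w.1, w.2.1, w.2.2, s'⟩

/-- `n` machine transitions. -/
def TM.multiStep (M : TM) : ℕ → Config M → Option (Config M)
  | 0, C => some C
  | n + 1, C => (M.step C).bind (M.multiStep n)

/-- The fixed ordering `0 < 1 < L < R` of `B_I`. -/
def BI.toFin : BI → Fin 4
  | b0 => 0
  | b1 => 1
  | bL => 2
  | bR => 3

/-- The fixed ordering `0 < 1 < □` of `B_W`. -/
def BW.toFin : BW → Fin 3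
  | w0 => 0
  | w1 => 1
  | wB => 2

/-- Encoding of configurations:
    `⟨C⟩ = λx.(x ⟨i⟩ ⟨n̂⟩ ⟨w_l^R⟩ ⟨a⟩ ⟨w_r⟩ ⟨s⟩)`. -/
def encConfig {M : TM} (C : Config M) : Lam :=
  .lam (mkApps (.var 0)
    [encStr 4 (C.input.map BI.toFin),
     encBits (Nat.bits C.pos),
     encStr 3 (C.left.reverse.map BW.toFin),
     encChar 3 C.head.toFin,
     encStr 3 (C.right.map BW.toFin),
     encChar M.Q C.state])

/-- A bit as an input character. -/
def bitToBI (b : Bool) : BI := if b then .b1 else .b0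

/-- The initial configuration on binary input `i`: input tape `L·i·R`,
    input head at position `0`, empty work tape, initial state. -/
def initConfig (M : TM) (i : List Bool) : Config M :=
  ⟨BI.bL :: (i.map bitToBI) ++ [BI.bR], 0, [], BW.wB, [], M.qin⟩

/-- Scott-encoded booleans: `⟨true⟩ = λx.λy.x`, `⟨false⟩ = λx.λy.y`. -/
def encBool : Bool → Lam
  | true => .lam (.lam (.var 1))
  | false => .lam (.lam (.var 0))

/-! On `0·s` the fixpoint `predLam` recurses on `s` with the continuation `λr. k ⟨1·r⟩`; on `1·s` it
answers `k ⟨ε⟩` or `k ⟨0·s⟩` at once. So every bit costs at most 9 steps, and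
`|n̂| ≤ log₂(n+1) + 1`. The finitely many fixed reduction sequences are computed by an evaluator
on open terms in which `var 0` stands for the continuation and `var 1` for the rest of the
string; as weak reduction commutes with substituting values, they hold for every continuation
and every string. -/

namespace Lam

theorem lift_lift (t : Lam) {i j : ℕ} (h : i ≤ j) :
    lift i (lift j t) = lift (j + 1) (lift i t) := by
  induction t generalizing i j with
  | var n =>
    simp only [lift]
    split_ifs <;> simp only [lift] <;> split_ifs <;> first | rfl | omega
  | lam t ih => simp only [lift, ih (Nat.succ_le_succ h)]
  | app t u iht ihu => simp only [lift, iht h, ihu h]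

@[simp]
theorem subst_lift (t : Lam) (j : ℕ) (u : Lam) : subst (lift j t) j u = t := by
  induction t generalizing j u with
  | var n =>
    simp only [lift]
    split_ifs <;> simp only [subst] <;> split_ifs <;> first | rfl | omega
  | lam t ih => simp only [lift, subst, ih]
  | app t v iht ihv => simp only [lift, subst, iht, ihv]

theorem lift_subst (t u : Lam) {i j : ℕ} (h : i ≤ j) :
    lift i (subst t j u) = subst (lift i t) (j + 1) (lift i u) := by
  induction t generalizing u i j with
  | var n =>
    simp only [subst, lift]
    split_ifs <;> simp only [subst, lift] <;> split_ifs <;> first | rfl | omega | (congr 1; omega)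
  | lam t ih =>
    simp only [subst, lift, ih _ (Nat.succ_le_succ h), lift_lift u (Nat.zero_le i)]
  | app t v iht ihv => simp only [subst, lift, iht u h, ihv u h]

theorem subst_subst (t u v : Lam) {i j : ℕ} (h : i ≤ j) :
    subst (subst t i u) j v = subst (subst t (j + 1) (lift i v)) i (subst u j v) := by
  induction t generalizing u v i j with
  | var n =>
    simp only [subst]
    split_ifs <;> (try simp only [subst]) <;> (try split_ifs) <;>
      first | rfl | omega | exact (subst_lift v i _).symm
  | lam t ih =>
    simp only [subst, ih _ _ (Nat.succ_le_succ h), lift_lift v (Nat.zero_le i),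
      lift_subst u v (Nat.zero_le j)]
  | app t s iht ihs => simp only [subst, iht u v h, ihs u v h]

theorem ClosedUnder.mono {d e : ℕ} {t : Lam} (ht : ClosedUnder d t) (hde : d ≤ e) :
    ClosedUnder e t := by
  induction t generalizing d e with
  | var n => exact Nat.lt_of_lt_of_le ht hde
  | lam t ih => exact ih ht (Nat.succ_le_succ hde)
  | app t u iht ihu => exact ⟨iht ht.1 hde, ihu ht.2 hde⟩

theorem ClosedUnder.lift_eq {d : ℕ} {t : Lam} (ht : ClosedUnder d t) {j : ℕ} (hj : d ≤ j) :
    lift j t = t := by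
  induction t generalizing d j with
  | var n =>
    simp only [ClosedUnder] at ht
    simp only [lift, if_pos (Nat.lt_of_lt_of_le ht hj)]
  | lam t ih => simp only [lift, ih ht (Nat.succ_le_succ hj)]
  | app t u iht ihu => simp only [lift, iht ht.1 hj, ihu ht.2 hj]

theorem ClosedUnder.subst_eq {d : ℕ} {t : Lam} (ht : ClosedUnder d t) {j : ℕ} (hj : d ≤ j)
    (u : Lam) : subst t j u = t := by
  induction t generalizing d j u with
  | var n =>
    simp only [ClosedUnder] at ht
    simp only [subst, if_pos (Nat.lt_of_lt_of_le ht hj)]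
  | lam t ih => simp only [subst, ih ht (Nat.succ_le_succ hj)]
  | app t v iht ihv => simp only [subst, iht ht.1 hj, ihv ht.2 hj]

theorem IsValue.subst {w : Lam} (hw : w.IsValue) {v : Lam} (hv : v.IsValue) (j : ℕ) :
    (Lam.subst w j v).IsValue := by
  cases w with
  | var n =>
    simp only [Lam.subst]
    split_ifs <;> trivial
  | lam t => trivial
  | app t u => exact hw.elim

theorem Step.subst {a b : Lam} (h : Step a b) {v : Lam} (hv : v.IsValue) (j : ℕ) :
    Step (Lam.subst a j v) (Lam.subst b j v) := by
  induction h with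
  | @beta t w hw =>
    rw [subst_subst t w v (Nat.zero_le j)]
    exact .beta (hw.subst hv j)
  | appL hw _ ih => exact .appL (hw.subst hv j) ih

theorem StepN.subst {m : ℕ} {a b : Lam} (h : StepN m a b) {v : Lam} (hv : v.IsValue)
    (j : ℕ) : StepN m (Lam.subst a j v) (Lam.subst b j v) := by
  induction h with
  | refl t => exact .refl _
  | head hs _ ih => exact .head (hs.subst hv j) ih

theorem StepN.trans {m n : ℕ} {a b c : Lam} (h₁ : StepN m a b) (h₂ : StepN n b c) :
    StepN (m + n) a c := by
  induction h₁ with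
  | refl t => simpa using h₂
  | head hs _ ih => rw [Nat.add_right_comm]; exact .head hs (ih h₂)

theorem StepN.tail {m : ℕ} {a b c : Lam} (h : StepN m a b) (hs : Step b c) :
    StepN (m + 1) a c :=
  h.trans (.head hs (.refl _))

/-- Executable weak reduction, so that fixed reduction sequences of concrete terms are `rfl`. -/
def step? : Lam → Option Lam
  | app _ (app _ _) => none
  | app (lam t) v => some (Lam.subst t 0 v)
  | app t v => (step? t).map (app · v)
  | _ => none

theorem Step.of_step?_eq_some {t t' : Lam} (h : step? t = some t') : Step t t' := by
  induction t generalizing t' with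
  | var n => simp [step?] at h
  | lam b => simp [step?] at h
  | app f v ihf _ =>
    cases v with
    | app => simp [step?] at h
    | var n | lam b =>
      cases f with
      | var => simp [step?] at h
      | lam b => cases h; exact .beta trivial
      | app f₁ f₂ =>
        obtain ⟨u, hu, rfl⟩ := Option.map_eq_some_iff.mp h
        exact .appL trivial (ihf hu)

def steps? : ℕ → Lam → Option Lam
  | 0, t => some t
  | n + 1, t => (step? t).bind (steps? n)

theorem StepN.of_steps?_eq_some {n : ℕ} {t t' : Lam} (h : steps? n t = some t') :
    StepN n t t' := by
  induction n generalizing t with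
  | zero => cases h; exact .refl _
  | succ n ih =>
    obtain ⟨u, hu, hrest⟩ := Option.bind_eq_some_iff.mp h
    exact .head (.of_step?_eq_some hu) (ih hrest)

end Lam

open Lam

/-- `λx₀.λx₁.λx_ε. x_b r`, i.e. `⟨b·s⟩` when `r = ⟨s⟩` (no shifting is done on `r`). -/
def encCons (b : Bool) (r : Lam) : Lam :=
  lam (lam (lam (app (var (if b then 1 else 2)) r)))

theorem encBits_cons (b : Bool) (s : List Bool) : encBits (b :: s) = encCons b (encBits s) := by
  cases b <;> rfl

theorem encBits_isValue (s : List Bool) : (encBits s).IsValue := by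
  cases s with
  | nil => trivial
  | cons b s => rw [encBits_cons]; trivial

theorem encBits_closed (s : List Bool) : (encBits s).Closed := by
  induction s with
  | nil => simp [encBits, Closed, ClosedUnder]
  | cons b s ih =>
    rw [encBits_cons]
    exact ⟨by cases b <;> simp [ClosedUnder], ih.mono (Nat.zero_le 3)⟩

@[simp]
theorem encBits_lift (s : List Bool) (j : ℕ) : lift j (encBits s) = encBits s :=
  (encBits_closed s).lift_eq (Nat.zero_le j)

@[simp]
theorem encBits_subst (s : List Bool) (j : ℕ) (u : Lam) : subst (encBits s) j u = encBits s :=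
  (encBits_closed s).subst_eq (Nat.zero_le j) u

theorem subst_encCons (b : Bool) (r : Lam) (j : ℕ) (u : Lam) :
    subst (encCons b r) j u = encCons b (subst r (j + 3) (lift 0 (lift 0 (lift 0 u)))) := by
  cases b <;> simp [encCons, subst]

/-- `λr. K ⟨b·r⟩`. -/
def consCont (b : Bool) (K : Lam) : Lam :=
  lam (app (lift 0 K) (encCons b (var 3)))

theorem consCont_step (b : Bool) (K : Lam) (s : List Bool) :
    Step (app (consCont b K) (encBits s)) (app K (encBits (b :: s))) := by
  have h := Step.beta (t := app (lift 0 K) (encCons b (var 3))) (encBits_isValue s)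
  cases b <;> simpa [consCont, subst, encCons, encBits_cons] using h

theorem subst_consCont (b : Bool) (K : Lam) (j : ℕ) (u : Lam) :
    subst (consCont b K) j u = consCont b (subst K j u) := by
  simp [consCont, subst, subst_encCons, lift_subst K u (Nat.zero_le j)]

/-- `λf.λk.λs. s (λs'.λ_. f f (λr. k ⟨1·r⟩) s') (λs'.λ_. s' B B (λ_. k ⟨ε⟩) I) (λ_. k ⟨ε⟩) I`
with `B = λ_.λ_. k ⟨0·s'⟩`. The branches are thunks forced by the trailing `I`, because in
`Λ_det` the arguments of the Scott case analysis must be values. -/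
def predFix : Lam :=
  lam (lam (lam (mkApps (var 0)
    [lam (lam (mkApps (var 4) [var 4, consCont true (var 3), var 1])),
     lam (lam (mkApps (var 1)
      [lam (lam (app (var 5) (encCons false (var 6)))),
       lam (lam (app (var 5) (encCons false (var 6)))),
       lam (app (var 4) (encBits [])),
       lam (var 0)])),
     lam (app (var 2) (encBits [])),
     lam (var 0)])))

def predLam : Lam := app predFix predFix

theorem predLam_closed : predLam.Closed := by
  simp [predLam, predFix, consCont, encCons, mkApps, encBits, Closed, ClosedUnder, lift]

theorem predLam_inDet : predLam.InDet := by
  simp [predLam, predFix, consCont, encCons, mkApps, encBits, InDet, IsValue, lift]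

@[simp]
theorem predLam_subst (j : ℕ) (u : Lam) : subst predLam j u = predLam :=
  predLam_closed.subst_eq (Nat.zero_le j) u

theorem Lam.StepN.instantiate {m : ℕ} {a b : Lam} (h : StepN m a b) (s : List Bool) {K : Lam}
    (hK : K.IsValue) :
    StepN m (Lam.subst (Lam.subst a 1 (encBits s)) 0 K)
      (Lam.subst (Lam.subst b 1 (encBits s)) 0 K) :=
  (h.subst (encBits_isValue s) 1).subst hK 0

theorem predLam_steps_nil {K : Lam} (hK : K.IsValue) :
    StepN 7 (app (app predLam K) (encBits [])) (app K (encBits [])) := by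
  have h := (StepN.of_steps?_eq_some (n := 7) (t := app (app predLam (var 0)) (encBits []))
    (t' := app (var 0) (encBits [])) rfl).instantiate [] hK
  simpa [subst] using h

theorem predLam_steps_false_cons (s : List Bool) {K : Lam} (hK : K.IsValue) :
    StepN 8 (app (app predLam K) (encBits (false :: s)))
      (app (app predLam (consCont true K)) (encBits s)) := by
  have h := (StepN.of_steps?_eq_some (n := 8)
    (t := app (app predLam (var 0)) (encCons false (var 4)))
    (t' := app (app predLam (consCont true (var 0))) (var 1)) rfl).instantiate s hK
  simpa [subst, subst_encCons, subst_consCont, encBits_cons] using h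

theorem predLam_steps_true_nil {K : Lam} (hK : K.IsValue) :
    StepN 12 (app (app predLam K) (encBits [true])) (app K (encBits [])) := by
  have h := (StepN.of_steps?_eq_some (n := 12) (t := app (app predLam (var 0)) (encBits [true]))
    (t' := app (var 0) (encBits [])) rfl).instantiate [] hK
  simpa [subst] using h

theorem predLam_steps_true_cons_cons (b : Bool) (s : List Bool) {K : Lam} (hK : K.IsValue) :
    StepN 13 (app (app predLam K) (encBits (true :: b :: s)))
      (app K (encBits (false :: b :: s))) := by
  have h : StepN 13 (app (app predLam (var 0)) (encCons true (encCons b (var 7))))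
      (app (var 0) (encCons false (encCons b (var 7)))) := by
    cases b <;> exact StepN.of_steps?_eq_some rfl
  simpa [subst, subst_encCons, encBits_cons] using h.instantiate s hK

theorem predLam_spec : ∀ (s : List Bool) {K : Lam}, K.IsValue →
    ∃ m ≤ 9 * s.length + 13,
      StepN m (app (app predLam K) (encBits s)) (app K (encBits (rpred s)))
  | [], _, hK => ⟨7, by omega, predLam_steps_nil hK⟩
  | false :: s, K, hK =>
    have ⟨m, hm, hrec⟩ := predLam_spec s (K := consCont true K) trivial
    ⟨8 + m + 1, by simp only [List.length_cons]; omega,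
      ((predLam_steps_false_cons s hK).trans hrec).tail (consCont_step true K _)⟩
  | [true], _, hK => ⟨12, by simp, predLam_steps_true_nil hK⟩
  | true :: b :: s, _, hK => ⟨13, by simp, predLam_steps_true_cons_cons b s hK⟩

theorem length_bits_le_log_succ (n : ℕ) : (Nat.bits n).length ≤ Nat.log 2 (n + 1) + 1 := by
  rw [Nat.size_eq_bits_len, Nat.size_le]
  have := Nat.lt_pow_succ_log_self (b := 2) (by norm_num) (n + 1)
  omega

/-- there is a closed λ-term `pred_λ` of `Λ_det` and a constant `c`
    such that for every value `k` and every `n ≥ 1`,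
    `pred_λ k ⟨n̂⟩ →det^m k ⟨pred(n̂)⟩` with `m ≤ c·(log₂(n+1)+1)`. -/
theorem pred_term_correct :
    ∃ (predTm : Lam) (c : ℕ), predTm.Closed ∧ predTm.InDet ∧
      ∀ kont : Lam, kont.IsValue → kont.InDet → ∀ n : ℕ, 1 ≤ n →
        ∃ m : ℕ, m ≤ c * (Nat.log 2 (n + 1) + 1) ∧
          Lam.StepN m (.app (.app predTm kont) (encBits (Nat.bits n)))
            (.app kont (encBits (rpred (Nat.bits n)))) := by
  refine ⟨predLam, 22, predLam_closed, predLam_inDet, fun kont hkont _ n _ => ?_⟩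
  obtain ⟨m, hm, hsteps⟩ := predLam_spec (Nat.bits n) hkont
  have hlen := length_bits_le_log_succ n
  exact ⟨m, by omega, hsteps⟩

end LogTM
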